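/- If A ∈ sp(V, Ω) satisfies A² = 0, then Aut(V, θ^A) = Sp(V, Ω)^A: every smooth diffeomorphism g: V → V satisfying Ω(g(z) − A(g(z)), Dg_z(v)) = Ω(z − Az, v) for all z, v ∈ V is a linear symplectic automorphism that commutes with A, and conversely every element of Sp(V, Ω) commuting with A preserves θ^A. -/

import Mathlib

/-!
Differentiating `Ω (g z - A (g z)) (Dg_z v) = Ω (z - A z) v` in `z` and antisymmetrizing, the
second derivatives cancel by symmetry and, since `A ∈ sp(V, Ω)`, what is left is
`Ω (Dg_z u) (Dg_z v) = Ω u v`. So every `Dg_z` is symplectic, hence invertible, and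
nondegeneracy turns the hypothesis into `Dg_z (z - A z) = g z - A (g z)`: `g` preserves the linear
vector field `z ↦ z - A z`, so it fixes its only zero `0` and commutes with its flow
`φ_t = e^t (1 - t A)`, and then so does `T = Dg_0`. As `t → -∞` the flow contracts like `e^t |t|` while `φ_t⁻¹ = φ_{-t}` grows
only like `e^{-t} |t|`, so conjugating the quadratic Taylor remainder `g - T` by `φ_t` gives
`‖(g - T) z‖ ≤ C e^t |t|³ → 0`. Hence `g = T` is linear.
-/

open Filter Topology Asymptotics

section Calculus

variable {E F : Type*} [NormedAddCommGroup E] [NormedSpace ℝ E]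
  [NormedAddCommGroup F] [NormedSpace ℝ F]

theorem ContDiffAt.isBigO_sub_sub_fderiv {f : E → F} {x : E} (hf : ContDiffAt ℝ 2 f x) :
    (fun y => f y - f x - fderiv ℝ f x (y - x)) =O[𝓝 x] fun y => ‖y - x‖ ^ 2 := by
  obtain ⟨K, t, ht, hK⟩ := (hf.fderiv_right (m := 1) le_rfl).exists_lipschitzOnWith
  obtain ⟨ε, hε, hεt⟩ := Metric.mem_nhds_iff.1 (inter_mem ht (hf.eventually (by simp)))
  refine IsBigO.of_bound K ?_
  filter_upwards [Metric.ball_mem_nhds x hε] with y hy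
  have hsub : Metric.closedBall x ‖y - x‖ ⊆ t ∩ {w | ContDiffAt ℝ 2 f w} :=
    (Metric.closedBall_subset_ball (by simpa [dist_eq_norm] using hy)).trans hεt
  have hmvt := (convex_closedBall x ‖y - x‖).norm_image_sub_le_of_norm_hasFDerivWithin_le'
    (f := f) (φ := fderiv ℝ f x) (C := K * ‖y - x‖) (y := y)
    (fun w hw => ((show ContDiffAt ℝ 2 f w from (hsub hw).2).differentiableAt two_ne_zero
      ).hasFDerivAt.hasFDerivWithinAt)
    (fun w hw => (hK.norm_sub_le (hsub hw).1 (mem_of_mem_nhds ht)).trans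
      (by gcongr; simpa [dist_eq_norm] using hw))
    (Metric.mem_closedBall_self (norm_nonneg _)) (by simp [dist_eq_norm])
  simpa [sq, mul_assoc] using hmvt

theorem apply_flow_eq_flow_apply {B : E →L[ℝ] E} {g : E → E} (hg : Differentiable ℝ g)
    (hgB : ∀ z, fderiv ℝ g z (B z) = B (g z)) {φ : ℝ → E →L[ℝ] E}
    (hφ : ∀ x t, HasDerivAt (fun s => φ s x) (B (φ t x)) t) (hφ0 : φ 0 = 1) (t : ℝ) (z : E) :
    g (φ t z) = φ t (g z) := by
  have hsol := ODE_solution_unique_univ (v := fun _ => B) (s := fun _ => Set.univ) (t₀ := 0)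
    (f := fun t => g (φ t z)) (g := fun t => φ t (g z))
    (fun _ => B.lipschitz.lipschitzOnWith)
    (fun t => ⟨by simpa [hgB, Function.comp_def] using
      (hg _).hasFDerivAt.comp_hasDerivAt t (hφ z t), trivial⟩)
    (fun t => ⟨hφ (g z) t, trivial⟩) (by simp [hφ0])
  exact congrFun hsol t

theorem commute_fderiv_zero_of_comp_eq_comp {g : E → E} (hg : DifferentiableAt ℝ g 0)
    {L : E →L[ℝ] E} (hL : ∀ z, g (L z) = L (g z)) : Commute (fderiv ℝ g 0) L := by
  have hgL : HasFDerivAt g (fderiv ℝ g 0) (L 0) := by simpa using hg.hasFDerivAt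
  have h₁ : HasFDerivAt (g ∘ L) (fderiv ℝ g 0 ∘L L) 0 := hgL.comp 0 L.hasFDerivAt
  rw [show g ∘ L = L ∘ g from funext hL] at h₁
  exact h₁.unique (L.hasFDerivAt.comp 0 hg.hasFDerivAt)

theorem fderiv_antisymm_of_apply_fderiv_eq {β : E →L[ℝ] E →L[ℝ] F} {g : E → E}
    (hg : ContDiff ℝ 2 g) (H : ∀ z v, β (g z) (fderiv ℝ g z v) = β z v) (z u v : E) :
    β (fderiv ℝ g z u) (fderiv ℝ g z v) - β (fderiv ℝ g z v) (fderiv ℝ g z u) =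
      β u v - β v u := by
  have hD : HasFDerivAt (fderiv ℝ g) (fderiv ℝ (fderiv ℝ g) z) z :=
    ((hg.fderiv_right (m := 1) le_rfl).differentiable one_ne_zero z).hasFDerivAt
  have hdiff (u v : E) : β (g z) (fderiv ℝ (fderiv ℝ g) z u v) +
      β (fderiv ℝ g z u) (fderiv ℝ g z v) = β u v := by
    have h₁ := (β.hasFDerivAt.comp z ((hg.differentiable two_ne_zero z).hasFDerivAt)).clm_apply
      (hD.clm_apply (hasFDerivAt_const v z))
    have h₂ := β.hasFDerivAt.clm_apply (hasFDerivAt_const v z) (x := z)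
    rw [show (fun y => (β ∘ g) y (fderiv ℝ g y v)) = fun y => β y v from funext (H · v)] at h₁
    simpa using DFunLike.congr_fun (h₁.unique h₂) u
  rw [← hdiff u v, ← hdiff v u, hg.contDiffAt.isSymmSndFDerivAt (by simp) u v]
  abel

end Calculus

section Flow

variable {E : Type*} [NormedAddCommGroup E] [NormedSpace ℝ E] (A : E →L[ℝ] E)

/-- For `A ∘L A = 0` this is `exp (t • (1 - A))`, the flow of the vector field `z ↦ z - A z`. -/
noncomputable def liouvilleFlow (t : ℝ) : E →L[ℝ] E := Real.exp t • (1 - t • A)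

variable {A}

@[simp]
theorem liouvilleFlow_apply (t : ℝ) (x : E) :
    liouvilleFlow A t x = Real.exp t • (x - t • A x) := rfl

theorem liouvilleFlow_zero : liouvilleFlow A 0 = 1 := by
  ext x; simp

theorem hasDerivAt_liouvilleFlow_apply (hA : A ∘L A = 0) (x : E) (t : ℝ) :
    HasDerivAt (fun s => liouvilleFlow A s x) ((1 - A) (liouvilleFlow A t x)) t := by
  have hAA : A (A x) = 0 := by simpa using congrArg (· x) hA
  have h := (Real.hasDerivAt_exp t).smul (((hasDerivAt_id t).smul_const (A x)).const_sub x)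
  refine h.congr_deriv ?_
  simp only [sub_apply, one_apply_eq_self, liouvilleFlow_apply, map_smul, map_sub, hAA, sub_zero,
    id]
  module

theorem liouvilleFlow_neg_apply_liouvilleFlow_apply (hA : A ∘L A = 0) (t : ℝ) (x : E) :
    liouvilleFlow A (-t) (liouvilleFlow A t x) = x := by
  have hAA : A (A x) = 0 := by simpa using congrArg (· x) hA
  have he : Real.exp (-t) * Real.exp t = 1 := by rw [← Real.exp_add]; simp
  simp only [liouvilleFlow_apply, map_smul, map_sub, hAA, smul_zero, sub_zero, smul_smul]
  match_scalars <;> [linear_combination he; ring]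

theorem norm_liouvilleFlow_apply_le (t : ℝ) (x : E) :
    ‖liouvilleFlow A t x‖ ≤ Real.exp t * (1 + |t| * ‖A‖) * ‖x‖ := by
  rw [liouvilleFlow_apply, norm_smul, Real.norm_of_nonneg (Real.exp_pos t).le, mul_assoc]
  gcongr
  calc ‖x - t • A x‖ ≤ ‖x‖ + |t| * (‖A‖ * ‖x‖) := by
        grw [norm_sub_le, norm_smul, Real.norm_eq_abs, A.le_opNorm x]
    _ = (1 + |t| * ‖A‖) * ‖x‖ := by ring

theorem tendsto_exp_mul_one_add_abs_mul_pow (a : ℝ) (n : ℕ) :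
    Tendsto (fun t => Real.exp t * (1 + |t| * a) ^ n) atBot (𝓝 0) := by
  have h := (Polynomial.tendsto_div_exp_atTop
    ((Polynomial.C 1 + Polynomial.C a * Polynomial.X) ^ n)).comp tendsto_neg_atBot_atTop
  refine h.congr' ?_
  filter_upwards [eventually_le_atBot 0] with t ht
  simp only [Function.comp_apply, Polynomial.eval_pow, Polynomial.eval_add, Polynomial.eval_mul,
    Polynomial.eval_C, Polynomial.eval_X, abs_of_nonpos ht, Real.exp_neg, div_inv_eq_mul]
  ring

theorem eq_zero_of_isBigO_sq_of_liouvilleFlow_comm (hA : A ∘L A = 0) {ψ : E → E}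
    (hψ : ψ =O[𝓝 0] fun w => ‖w‖ ^ 2)
    (hcomm : ∀ t z, ψ (liouvilleFlow A t z) = liouvilleFlow A t (ψ z)) (z : E) : ψ z = 0 := by
  obtain ⟨C, hC, hCψ⟩ := hψ.exists_pos
  have hflow : Tendsto (fun t => liouvilleFlow A t z) atBot (𝓝 0) := by
    refine squeeze_zero_norm (fun t => norm_liouvilleFlow_apply_le t z) ?_
    simpa using (tendsto_exp_mul_one_add_abs_mul_pow ‖A‖ 1).mul_const ‖z‖
  have hbound : ∀ᶠ t in atBot, ‖ψ z‖ ≤ C * ‖z‖ ^ 2 * (Real.exp t * (1 + |t| * ‖A‖) ^ 3) := by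
    filter_upwards [hflow.eventually hCψ.bound] with t ht
    calc ‖ψ z‖ = ‖liouvilleFlow A (-t) (ψ (liouvilleFlow A t z))‖ := by
          rw [hcomm, liouvilleFlow_neg_apply_liouvilleFlow_apply hA]
      _ ≤ Real.exp (-t) * (1 + |t| * ‖A‖) * (C * ‖liouvilleFlow A t z‖ ^ 2) := by
          grw [norm_liouvilleFlow_apply_le, abs_neg, ht, Real.norm_of_nonneg (sq_nonneg _)]
      _ ≤ Real.exp (-t) * (1 + |t| * ‖A‖) * (C * (Real.exp t * (1 + |t| * ‖A‖) * ‖z‖) ^ 2) := by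
          grw [norm_liouvilleFlow_apply_le]
      _ = C * ‖z‖ ^ 2 * (Real.exp t * (1 + |t| * ‖A‖) ^ 3) := by
          rw [Real.exp_neg]; field_simp
  have hlim := (tendsto_exp_mul_one_add_abs_mul_pow ‖A‖ 3).const_mul (C * ‖z‖ ^ 2)
  rw [mul_zero] at hlim
  exact norm_le_zero_iff.1 (ge_of_tendsto hlim hbound)

theorem eq_fderiv_zero_of_fderiv_apply_sub (hA : A ∘L A = 0) {g : E → E} (hg : ContDiff ℝ 2 g)
    (hX : ∀ z, fderiv ℝ g z (z - A z) = g z - A (g z)) (z : E) : g z = fderiv ℝ g 0 z := by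
  have hg0 : g 0 = 0 := by
    have h := hX 0
    have hAA : A (A (g 0)) = 0 := by simpa using congrArg (· (g 0)) hA
    rw [map_zero, sub_zero, map_zero, eq_comm, sub_eq_zero] at h
    calc g 0 = A (A (g 0)) := by rw [← h, ← h]
      _ = 0 := hAA
  have hflow := apply_flow_eq_flow_apply (B := 1 - A) (hg.differentiable two_ne_zero)
    (by simpa using hX) (hasDerivAt_liouvilleFlow_apply hA) liouvilleFlow_zero
  set T := fderiv ℝ g 0
  have hT (t : ℝ) : Commute T (liouvilleFlow A t) :=
    commute_fderiv_zero_of_comp_eq_comp (hg.differentiable two_ne_zero 0) (hflow t)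
  refine sub_eq_zero.1 (eq_zero_of_isBigO_sq_of_liouvilleFlow_comm hA
    (ψ := fun w => g w - T w) ?_ (fun t w => ?_) z)
  · simpa [hg0] using hg.contDiffAt.isBigO_sub_sub_fderiv (x := 0)
  · have hTw : T (liouvilleFlow A t w) = liouvilleFlow A t (T w) := DFunLike.congr_fun (hT t).eq w
    simp only [hflow, map_sub, hTw]

end Flow

section Symplectic

variable {V : Type*} [NormedAddCommGroup V] [NormedSpace ℝ V] [FiniteDimensional ℝ V]
  {Ω : V →ₗ[ℝ] V →ₗ[ℝ] ℝ} {A : V →ₗ[ℝ] V} {g : V → V}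

variable (Ω A g) in
/-- `g` preserves the Liouville form `θ^A_z = ½ Ω (z - A z) ·`. -/
def PreservesLiouville : Prop :=
  ∀ z v, Ω (g z - A (g z)) (fderiv ℝ g z v) = Ω (z - A z) v

theorem surjective_of_forall_apply_apply_eq (hΩnd : ∀ x, (∀ y, Ω x y = 0) → x = 0)
    {T : V →ₗ[ℝ] V} (hT : ∀ u v, Ω (T u) (T v) = Ω u v) : Function.Surjective T := by
  refine LinearMap.injective_iff_surjective.1 ((injective_iff_map_eq_zero T).2 fun u hu => ?_)
  refine hΩnd u fun v => ?_
  rw [← hT, hu, map_zero, LinearMap.zero_apply]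

theorem PreservesLiouville.fderiv_apply_apply_eq (H : PreservesLiouville Ω A g)
    (hΩalt : Ω.IsAlt) (hA : ∀ x y, Ω (A x) y + Ω x (A y) = 0) (hg : ContDiff ℝ 2 g)
    (z u v : V) : Ω (fderiv ℝ g z u) (fderiv ℝ g z v) = Ω u v := by
  let β : V →L[ℝ] V →L[ℝ] ℝ := LinearMap.toContinuousLinearMap
    ((LinearMap.toContinuousLinearMap : (V →ₗ[ℝ] ℝ) ≃ₗ[ℝ] (V →L[ℝ] ℝ)).toLinearMap ∘ₗ
      Ω ∘ₗ (LinearMap.id - A))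
  have hβ (x y : V) : β x y - β y x = 2 * Ω x y := by
    change Ω (x - A x) y - Ω (y - A y) x = 2 * Ω x y
    simp only [map_sub, LinearMap.sub_apply]
    linarith [hA x y, hΩalt.neg x y, hΩalt.neg (A y) x]
  have h := fderiv_antisymm_of_apply_fderiv_eq (β := β) hg H z u v
  rw [hβ, hβ] at h
  linarith

theorem PreservesLiouville.fderiv_apply_sub (H : PreservesLiouville Ω A g)
    (hΩnd : ∀ x, (∀ y, Ω x y = 0) → x = 0)
    (hsymp : ∀ z u v, Ω (fderiv ℝ g z u) (fderiv ℝ g z v) = Ω u v) (z : V) :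
    fderiv ℝ g z (z - A z) = g z - A (g z) := by
  refine (sub_eq_zero.1 (hΩnd _ fun y => ?_)).symm
  obtain ⟨v, rfl⟩ := surjective_of_forall_apply_apply_eq hΩnd
    (T := (fderiv ℝ g z : V →ₗ[ℝ] V)) (hsymp z) y
  rw [ContinuousLinearMap.coe_coe, map_sub, LinearMap.sub_apply, H, hsymp, sub_self]

end Symplectic

theorem stmt_17_general {V : Type*} [NormedAddCommGroup V] [NormedSpace ℝ V] [FiniteDimensional ℝ V]
    (Ω : V →ₗ[ℝ] V →ₗ[ℝ] ℝ)
    (hΩalt : ∀ x : V, Ω x x = 0)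
    (hΩnd : ∀ x : V, (∀ y : V, Ω x y = 0) → x = 0)
    (A : V →ₗ[ℝ] V) (hA : ∀ x y : V, Ω (A x) y + Ω x (A y) = 0)
    (hA2 : A ∘ₗ A = 0)
    (g : V → V) (hg : ContDiff ℝ (⊤ : ℕ∞) g) :
    (∀ z v : V, Ω (g z - A (g z)) (fderiv ℝ g z v) = Ω (z - A z) v) ↔
      (IsLinearMap ℝ g ∧ (∀ x y : V, Ω (g x) (g y) = Ω x y) ∧
        ∀ z : V, g (A z) = A (g z)) := by
  constructor
  · intro H
    have hg2 : ContDiff ℝ 2 g := hg.of_le (WithTop.coe_le_coe.2 le_top)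
    have hsymp := PreservesLiouville.fderiv_apply_apply_eq H hΩalt hA hg2
    have hX := PreservesLiouville.fderiv_apply_sub H hΩnd hsymp
    have hA2' : A.toContinuousLinearMap ∘L A.toContinuousLinearMap = 0 := by
      ext x; simpa using LinearMap.congr_fun hA2 x
    obtain ⟨T, rfl⟩ : ∃ T : V →L[ℝ] V, g = T :=
      ⟨_, funext (eq_fderiv_zero_of_fderiv_apply_sub hA2' hg2 hX)⟩
    exact ⟨T.toLinearMap.isLinear, by simpa [T.fderiv] using hsymp 0,
      fun z => by simpa [T.fderiv] using hX z⟩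
  · rintro ⟨hlin, hsymp, hcomm⟩ z v
    let T : V →L[ℝ] V := LinearMap.toContinuousLinearMap (IsLinearMap.mk' g hlin)
    have hfd : fderiv ℝ g z v = g v := by rw [show fderiv ℝ g z = T from T.fderiv]; rfl
    rw [hfd, ← hcomm, ← hlin.map_sub, hsymp]

/-- If `A ∈ sp(V, Ω)` satisfies `A² = 0`, then `Aut(V, θ^A) = Sp(V, Ω)^A`:
a smooth diffeomorphism `g : V → V` satisfies `Ω(g(z) − A(g(z)), Dg_z(v)) = Ω(z − Az, v)`
for all `z, v` if and only if `g` is a linear symplectic automorphism commuting with `A`. -/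
theorem stmt_17 {V : Type*} [NormedAddCommGroup V] [NormedSpace ℝ V] [FiniteDimensional ℝ V]
    (Ω : V →ₗ[ℝ] V →ₗ[ℝ] ℝ)
    (hΩalt : ∀ x : V, Ω x x = 0)
    (hΩnd : ∀ x : V, (∀ y : V, Ω x y = 0) → x = 0)
    (A : V →ₗ[ℝ] V) (hA : ∀ x y : V, Ω (A x) y + Ω x (A y) = 0)
    (hA2 : A ∘ₗ A = 0)
    (g ginv : V → V) (hg : ContDiff ℝ (⊤ : ℕ∞) g) (hginv : ContDiff ℝ (⊤ : ℕ∞) ginv)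
    (hli : Function.LeftInverse ginv g) (hri : Function.RightInverse ginv g) :
    (∀ z v : V, Ω (g z - A (g z)) (fderiv ℝ g z v) = Ω (z - A z) v) ↔
      (IsLinearMap ℝ g ∧ (∀ x y : V, Ω (g x) (g y) = Ω x y) ∧
        ∀ z : V, g (A z) = A (g z)) :=
  stmt_17_general Ω hΩalt hΩnd A hA hA2 g hg
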